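/- arXiv:1511.00452 — 3 statements merged into one kernel-verified Lean document; each statement's English description precedes it below -/
import Mathlib

section
/- Let q̄ ∈ P(M)^W, and suppose there exist distinct men a, b, c ∈ M and distinct women x, y, z ∈ W such that a, b, c all appear on the preference lists q_x, q_y, q_z and, restricted to {a, b, c}, these lists satisfy: a ≻_x b ≻_x c, b ≻_y c ≻_y a, and c ≻_z a ≻_z b. Then no q̄-stable one-side-querying matching mechanism is OSP for all three of the men a, b, and c. -/
/-- A preference list over `α` (a totally ordered subset of `α`), represented as a
duplicate-free list, most-preferred member first. Members of `α` not on the list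
are unranked (unacceptable). -/
abbrev PrefList (α : Type) : Type := {l : List α // l.Nodup}

/-- `x ≻ y` according to `p`: `x` is ranked above `y` on `p`, or `x` appears on `p`
while `y` does not. -/
def prefers {α : Type} (p : PrefList α) (x y : α) : Prop :=
  [x, y].Sublist p.val ∨ (x ∈ p.val ∧ y ∉ p.val)

/-- Strict preference over possible outcomes, where `none` means being unmatched:
being matched to someone on one's list is better than being unmatched, which is
better than being matched to someone not on one's list. -/
def outPrefers {α : Type} (p : PrefList α) : Option α → Option α → Prop
  | some x, some y => prefers p x y
  | some x, none => x ∈ p.val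
  | none, some y => y ∉ p.val
  | none, none => False

/-- A preference list is full if it ranks every member of the opposite side. -/
def IsFull {α : Type} (p : PrefList α) : Prop := ∀ x : α, x ∈ p.val

/-- A matching between `M` and `W`: a one-to-one mapping between a subset of `M`
and a subset of `W`, recorded as a partial injective function from men to women
(`μ.toFun m = none` meaning that `m` is unmatched). -/
structure Matching (M W : Type) where
  toFun : M → Option W
  inj : ∀ ⦃m m' : M⦄ ⦃w : W⦄, toFun m = some w → toFun m' = some w → m = m'

/-- Woman `w` strictly prefers man `m` (according to her list `q`) over the partner
matched to her by `μ` (or over remaining unmatched, if `μ` leaves her unmatched). -/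
def womanPrefersOver {M W : Type} (q : PrefList M) (μ : Matching M W) (w : W) (m : M) : Prop :=
  (∃ m', μ.toFun m' = some w ∧ prefers q m m') ∨
    ((∀ m', μ.toFun m' ≠ some w) ∧ m ∈ q.val)

/-- `μ` is stable with respect to men's profile `pbar` and women's profile `qbar`:
there is no man and woman each preferring the other over their match under `μ`, and
no participant is matched with a partner not on their preference list. -/
def IsStable {M W : Type} (pbar : M → PrefList W) (qbar : W → PrefList M)
    (μ : Matching M W) : Prop :=
  ¬ ((∃ m w, outPrefers (pbar m) (some w) (μ.toFun m) ∧ womanPrefersOver (qbar w) μ w m) ∨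
     (∃ m w, μ.toFun m = some w ∧ (w ∉ (pbar m).val ∨ m ∉ (qbar w).val)))

/-- `C` is `qbar`-stable: `C pbar` is stable with respect to `pbar` and `qbar` for
every men's profile `pbar`. -/
def IsStableRule {M W : Type} (qbar : W → PrefList M)
    (C : (M → PrefList W) → Matching M W) : Prop :=
  ∀ pbar, IsStable pbar qbar (C pbar)

/-- `C` is the `M`-optimal stable matching rule `C^qbar`: it maps each men's profile
`pbar` to a stable matching that every man weakly prefers to every stable matching. -/
def IsMOptimalStableRule {M W : Type} (qbar : W → PrefList M)
    (C : (M → PrefList W) → Matching M W) : Prop :=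
  ∀ pbar, IsStable pbar qbar (C pbar) ∧
    ∀ μ, IsStable pbar qbar μ → ∀ m, ¬ outPrefers (pbar m) (μ.toFun m) ((C pbar).toFun m)

/-- `C` is strategy-proof for man `m`. -/
def StrategyProofFor {M W : Type} [DecidableEq M]
    (C : (M → PrefList W) → Matching M W) (m : M) : Prop :=
  ∀ (pbar : M → PrefList W) (p' : PrefList W),
    ¬ outPrefers (pbar m) ((C (Function.update pbar m p')).toFun m) ((C pbar).toFun m)

/-- A women's profile `qbar` is cyclical if there are men `a`, `b`, `c` and women
`x`, `y` with `a ≻ₓ b ≻ₓ c ≻_y a`. -/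
def Cyclical {M W : Type} (qbar : W → PrefList M) : Prop :=
  ∃ (a b c : M) (x y : W),
    prefers (qbar x) a b ∧ prefers (qbar x) b c ∧ prefers (qbar y) c a

/-- A one-side-querying extensive-form matching mechanism for `M` over `W`: a rooted
tree each of whose leaves is labeled by a matching and each of whose internal nodes
queries a man; the edges out of an internal node querying `q` are the fibers of the
function `next` (two preference lists for `q` lie on the same outgoing edge iff they
are routed to the same subtree). -/
inductive Mech (M W : Type) : Type
  | leaf (μ : Matching M W)
  | node (q : M) (next : PrefList W → Mech M W)

/-- The matching rule implemented by a mechanism: route the profile from the root to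
a leaf and output that leaf's matching. -/
def Mech.run {M W : Type} : Mech M W → (M → PrefList W) → Matching M W
  | .leaf μ, _ => μ
  | .node q next, pbar => (next (pbar q)).run pbar

/-- Auxiliary definition of obvious strategy-proofness for man `m`: `P` is the set of
profiles passing through the current node. At each node querying `m`, for all profiles
`pbar`, `pbar'` passing through the node at which `m`'s lists diverge (are routed to
distinct subtrees), the outcome of `pbar'` is not strictly preferred (according to
`pbar m`) to the outcome of `pbar`. -/
def Mech.OSPAux {M W : Type} (m : M) : Mech M W → Set (M → PrefList W) → Prop
  | .leaf _, _ => True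
  | .node q next, P =>
      (q = m → ∀ pbar ∈ P, ∀ pbar' ∈ P, next (pbar m) ≠ next (pbar' m) →
        ¬ outPrefers (pbar m) (((next (pbar' m)).run pbar').toFun m)
            (((next (pbar m)).run pbar).toFun m)) ∧
      ∀ p : PrefList W, Mech.OSPAux m (next p) {pbar ∈ P | next (pbar q) = next p}

/-- `I` is obviously strategy-proof (OSP) for man `m`. -/
def Mech.OSPFor {M W : Type} (I : Mech M W) (m : M) : Prop :=
  Mech.OSPAux m I Set.univ

/-- A matching rule is OSP-implementable if it is implemented by some mechanism that
is OSP for every man. -/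
def OSPImplementable {M W : Type} (C : (M → PrefList W) → Matching M W) : Prop :=
  ∃ I : Mech M W, (∀ m : M, I.OSPFor m) ∧ ∀ pbar, I.run pbar = C pbar

/-- A two-sides-querying extensive-form matching mechanism: internal nodes may query
either a man (about his preference list over `W`) or a woman (about her preference
list over `M`). -/
inductive Mech2 (M W : Type) : Type
  | leaf (μ : Matching M W)
  | nodeM (q : M) (next : PrefList W → Mech2 M W)
  | nodeW (q : W) (next : PrefList M → Mech2 M W)

/-- The two-sides-querying matching rule implemented by a two-sides-querying mechanism. -/
def Mech2.run {M W : Type} :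
    Mech2 M W → (M → PrefList W) → (W → PrefList M) → Matching M W
  | .leaf μ, _, _ => μ
  | .nodeM q next, pbar, qbar => (next (pbar q)).run pbar qbar
  | .nodeW q next, pbar, qbar => (next (qbar q)).run pbar qbar

/-- Auxiliary definition of obvious strategy-proofness of a two-sides-querying
mechanism for man `m`; `P` is the set of two-sided profiles passing through the
current node. -/
def Mech2.OSPAux {M W : Type} (m : M) :
    Mech2 M W → Set ((M → PrefList W) × (W → PrefList M)) → Prop
  | .leaf _, _ => True
  | .nodeM q next, P =>
      (q = m → ∀ r ∈ P, ∀ r' ∈ P, next (r.1 m) ≠ next (r'.1 m) →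
        ¬ outPrefers (r.1 m) (((next (r'.1 m)).run r'.1 r'.2).toFun m)
            (((next (r.1 m)).run r.1 r.2).toFun m)) ∧
      ∀ p : PrefList W, Mech2.OSPAux m (next p) {r ∈ P | next (r.1 q) = next p}
  | .nodeW q next, P =>
      ∀ p : PrefList M, Mech2.OSPAux m (next p) {r ∈ P | next (r.2 q) = next p}

/-- A two-sides-querying mechanism `I` is obviously strategy-proof (OSP) for man `m`. -/
def Mech2.OSPForM {M W : Type} (I : Mech2 M W) (m : M) : Prop :=
  Mech2.OSPAux m I Set.univ

/-!
A stable mechanism that is OSP for `a`, `b` and `c` must, at each node querying one of them, keep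
together the three lists `[y]`, `[y, x]`, `[z, y]` of `a` (and their cyclic images for `b`, `c`):
under `a : [y]`, `c : [y, x]` the man `a` is unmatched in every stable matching, while some
profile in which `a` reports `[y, x]` or `[z, y]` forces `a` onto `y`, so separating the lists
would let `a` profit from a deviation at that node. Hence all 27 profiles built from these lists
reach the same leaf, but no single matching is stable for all of them.
-/

section

variable {M W : Type}

theorem prefers_irrefl (p : PrefList W) (w : W) : ¬ prefers p w w := by
  rintro (h | ⟨h, h'⟩)
  · simpa using h.nodup p.2
  · exact h' h

theorem prefers_of_val_eq_cons {p : PrefList W} {w w' : W} {l : List W} (hp : p.val = w :: l)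
    (hw' : w' ∈ l) : prefers p w w' :=
  Or.inl (hp ▸ (List.singleton_sublist.2 hw').cons_cons w)

namespace IsStable

variable {pbar : M → PrefList W} {qbar : W → PrefList M} {μ : Matching M W}

theorem mem_of_toFun_eq_some (h : IsStable pbar qbar μ) {m : M} {w : W}
    (hm : μ.toFun m = some w) : w ∈ (pbar m).val :=
  by_contra fun hw => h (Or.inr ⟨m, w, hm, Or.inl hw⟩)

theorem not_outPrefers_of_prefers (h : IsStable pbar qbar μ) {m m' : M} {w : W}
    (hm : μ.toFun m = some w) (hw : prefers (qbar w) m' m) :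
    ¬ outPrefers (pbar m') (some w) (μ.toFun m') :=
  fun hm' => h (Or.inl ⟨m', w, hm', Or.inl ⟨m, hm, hw⟩⟩)

theorem outPrefers_of_val_eq_cons (h : IsStable pbar qbar μ) {m : M} {w : W} {l : List W}
    (hp : (pbar m).val = w :: l) (hne : μ.toFun m ≠ some w) :
    outPrefers (pbar m) (some w) (μ.toFun m) := by
  cases hm : μ.toFun m with
  | none => simp [outPrefers, hp]
  | some w' =>
    have hw' := h.mem_of_toFun_eq_some hm
    rw [hp, List.mem_cons] at hw'
    rcases hw' with rfl | hw'
    · exact absurd hm hne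
    · exact prefers_of_val_eq_cons hp hw'

/-- Otherwise `w` would be unmatched, and `(m, w)` would block. -/
theorem not_outPrefers_of_sole_suitor (h : IsStable pbar qbar μ) {m : M} {w : W}
    (hsole : ∀ m', w ∈ (pbar m').val → m' = m) (hmw : m ∈ (qbar w).val) :
    ¬ outPrefers (pbar m) (some w) (μ.toFun m) := by
  intro hpref
  by_cases hmatched : ∃ m', μ.toFun m' = some w
  · obtain ⟨m', hm'⟩ := hmatched
    obtain rfl := hsole m' (h.mem_of_toFun_eq_some hm')
    rw [hm'] at hpref
    exact prefers_irrefl _ _ hpref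
  · exact h (Or.inl ⟨m, w, hpref, Or.inr ⟨fun m' => not_exists.mp hmatched m', hmw⟩⟩)

theorem toFun_eq_none_of_outranked (h : IsStable pbar qbar μ) {m m' : M} {w : W}
    {l : List W} (hmm' : m ≠ m') (hm : (pbar m).val = [w]) (hm' : (pbar m').val = w :: l)
    (hw : prefers (qbar w) m' m) : μ.toFun m = none := by
  cases hμm : μ.toFun m with
  | none => rfl
  | some w' =>
    have hw' := h.mem_of_toFun_eq_some hμm
    rw [hm, List.mem_singleton] at hw'
    subst hw'
    refine absurd (h.outPrefers_of_val_eq_cons hm' fun hμm' => hmm' ?_)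
      (h.not_outPrefers_of_prefers hμm hw)
    exact μ.inj hμm hμm'

theorem toFun_eq_some_of_sole_suitor (h : IsStable pbar qbar μ) {m : M} {w : W} {l : List W}
    (hm : (pbar m).val = w :: l) (hsole : ∀ m', w ∈ (pbar m').val → m' = m)
    (hmw : m ∈ (qbar w).val) : μ.toFun m = some w :=
  by_contra fun hne =>
    h.not_outPrefers_of_sole_suitor hsole hmw (h.outPrefers_of_val_eq_cons hm hne)

/-- `m` loses his first choice `z` to `m''`, who in turn loses `x` to `m'`, so `m` gets `y`. -/
theorem toFun_eq_some_of_first_choice_lost (h : IsStable pbar qbar μ) {m m' m'' : M}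
    {x y z : W} {l : List W} (hm'm'' : m' ≠ m'') (hmm'' : m ≠ m'')
    (hm : (pbar m).val = [z, y]) (hm' : (pbar m').val = x :: l) (hm'' : (pbar m'').val = [x, z])
    (hsole : ∀ n, y ∈ (pbar n).val → n = m) (hmy : m ∈ (qbar y).val)
    (hx : prefers (qbar x) m' m'') (hz : prefers (qbar z) m'' m) : μ.toFun m = some y := by
  have hm''x : μ.toFun m'' ≠ some x := fun hm''x =>
    h.not_outPrefers_of_prefers hm''x hx
      (h.outPrefers_of_val_eq_cons hm' fun hm'x => hm'm'' (μ.inj hm'x hm''x))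
  have hmz : μ.toFun m ≠ some z := by
    intro hmz
    refine h.not_outPrefers_of_prefers hmz hz ?_
    cases hμm'' : μ.toFun m'' with
    | none => simp [outPrefers, hm'']
    | some w =>
      have hw := h.mem_of_toFun_eq_some hμm''
      simp only [hm'', List.mem_cons, List.not_mem_nil, or_false] at hw
      rcases hw with rfl | rfl
      · exact absurd hμm'' hm''x
      · exact absurd (μ.inj hmz hμm'') hmm''
  refine by_contra fun hne => h.not_outPrefers_of_sole_suitor hsole hmy ?_
  cases hμm : μ.toFun m with
  | none => simp [outPrefers, hm]
  | some w =>
    have hw := h.mem_of_toFun_eq_some hμm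
    simp only [hm, List.mem_cons, List.not_mem_nil, or_false] at hw
    rcases hw with rfl | rfl
    · exact absurd hμm hmz
    · exact absurd hμm hne

end IsStable

/-- `hpool` sends all of `S` to a single leaf, whose matching `hleaf` refutes. -/
theorem Mech.exists_not_isStable_run (qbar : W → PrefList M) {S : Set (M → PrefList W)}
    {G : Set M} (hleaf : ∀ μ : Matching M W, ∃ pbar ∈ S, ¬ IsStable pbar qbar μ)
    (hpool : ∀ q next (P : Set (M → PrefList W)), S ⊆ P →
      (∀ pbar ∈ S, IsStable pbar qbar ((Mech.node q next).run pbar)) →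
      (∀ m ∈ G, (Mech.node q next).OSPAux m P) → ∃ p, ∀ pbar ∈ S, next (pbar q) = next p)
    (J : Mech M W) {P : Set (M → PrefList W)} (hSP : S ⊆ P) (hosp : ∀ m ∈ G, J.OSPAux m P) :
    ∃ pbar ∈ S, ¬ IsStable pbar qbar (J.run pbar) := by
  induction J generalizing P with
  | leaf μ => exact hleaf μ
  | node q next ih =>
    by_contra! hstable
    obtain ⟨p, hp⟩ := hpool q next P hSP hstable hosp
    obtain ⟨pbar, hpbar, hunstable⟩ := ih p (P := {pbar ∈ P | next (pbar q) = next p})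
      (fun pbar hpbar => ⟨hSP hpbar, hp pbar hpbar⟩) (fun m hm => (hosp m hm).2 p)
    have := hstable pbar hpbar
    rw [Mech.run, hp pbar hpbar] at this
    exact hunstable this

def cycleLists (w₁ w₂ w₃ : W) : Set (List W) := {[w₁], [w₁, w₂], [w₃, w₁]}

theorem nodup_of_mem_cycleLists {w₁ w₂ w₃ : W} {l : List W} (hl : l ∈ cycleLists w₁ w₂ w₃)
    (h₁₂ : w₁ ≠ w₂) (h₃₁ : w₃ ≠ w₁) : l.Nodup := by
  rcases hl with rfl | rfl | rfl <;> simp [h₁₂, h₃₁]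

def cycleProfiles (a b c : M) (x y z : W) : Set (M → PrefList W) :=
  {pbar | (pbar a).val ∈ cycleLists y x z ∧ (pbar b).val ∈ cycleLists z y x ∧
    (pbar c).val ∈ cycleLists x z y ∧ ∀ m, m ≠ a → m ≠ b → m ≠ c → (pbar m).val = []}

theorem cycleProfiles_rotate (a b c : M) (x y z : W) :
    cycleProfiles b c a y z x = cycleProfiles a b c x y z :=
  Set.ext fun _ =>
    ⟨fun ⟨hb, hc, ha, ho⟩ => ⟨ha, hb, hc, fun m hma hmb hmc => ho m hmb hmc hma⟩,
      fun ⟨ha, hb, hc, ho⟩ => ⟨hb, hc, ha, fun m hmb hmc hma => ho m hma hmb hmc⟩⟩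

theorem exists_mem_cycleProfiles {a b c : M} {x y z : W} (hab : a ≠ b) (hbc : b ≠ c)
    (hca : c ≠ a) (hxy : x ≠ y) (hyz : y ≠ z) (hzx : z ≠ x) {la lb lc : List W}
    (hla : la ∈ cycleLists y x z) (hlb : lb ∈ cycleLists z y x) (hlc : lc ∈ cycleLists x z y) :
    ∃ pbar ∈ cycleProfiles a b c x y z,
      (pbar a).val = la ∧ (pbar b).val = lb ∧ (pbar c).val = lc := by
  classical
  let pbar : M → PrefList W := fun m =>
    if m = a then ⟨la, nodup_of_mem_cycleLists hla hxy.symm hyz.symm⟩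
    else if m = b then ⟨lb, nodup_of_mem_cycleLists hlb hyz.symm hzx.symm⟩
    else if m = c then ⟨lc, nodup_of_mem_cycleLists hlc hzx.symm hxy.symm⟩
    else ⟨[], List.nodup_nil⟩
  have ha : (pbar a).val = la := by simp [pbar]
  have hb : (pbar b).val = lb := by simp [pbar, hab.symm]
  have hc : (pbar c).val = lc := by simp [pbar, hca, hbc.symm]
  refine ⟨pbar, ⟨ha ▸ hla, hb ▸ hlb, hc ▸ hlc, fun m hma hmb hmc => ?_⟩, ha, hb, hc⟩
  simp [pbar, hma, hmb, hmc]

/-- The hypotheses of the theorem, grouped into orbits of the rotation `(a b c) (x y z)`. -/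
structure IsCycleTriplet (qbar : W → PrefList M) (a b c : M) (x y z : W) : Prop where
  ne_ab : a ≠ b
  ne_bc : b ≠ c
  ne_ca : c ≠ a
  ne_xy : x ≠ y
  ne_yz : y ≠ z
  ne_zx : z ≠ x
  a_mem_y : a ∈ (qbar y).val
  b_mem_z : b ∈ (qbar z).val
  c_mem_x : c ∈ (qbar x).val
  a_x_b : prefers (qbar x) a b
  b_y_c : prefers (qbar y) b c
  c_z_a : prefers (qbar z) c a
  b_x_c : prefers (qbar x) b c
  c_y_a : prefers (qbar y) c a
  a_z_b : prefers (qbar z) a b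

namespace IsCycleTriplet

variable {qbar : W → PrefList M} {a b c : M} {x y z : W}

theorem rotate (h : IsCycleTriplet qbar a b c x y z) : IsCycleTriplet qbar b c a y z x where
  ne_ab := h.ne_bc
  ne_bc := h.ne_ca
  ne_ca := h.ne_ab
  ne_xy := h.ne_yz
  ne_yz := h.ne_zx
  ne_zx := h.ne_xy
  a_mem_y := h.b_mem_z
  b_mem_z := h.c_mem_x
  c_mem_x := h.a_mem_y
  a_x_b := h.b_y_c
  b_y_c := h.c_z_a
  c_z_a := h.a_x_b
  b_x_c := h.c_y_a
  c_y_a := h.a_z_b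
  a_z_b := h.b_x_c

theorem exists_profile_toFun_eq_none (h : IsCycleTriplet qbar a b c x y z) :
    ∃ pbar ∈ cycleProfiles a b c x y z, (pbar a).val = [y] ∧
      ∀ μ, IsStable pbar qbar μ → μ.toFun a = none := by
  obtain ⟨pbar, hpbar, ha, -, hc⟩ := exists_mem_cycleProfiles h.ne_ab h.ne_bc h.ne_ca h.ne_xy
    h.ne_yz h.ne_zx (la := [y]) (lb := [z]) (lc := [y, x]) (by simp [cycleLists])
    (by simp [cycleLists]) (by simp [cycleLists])
  exact ⟨pbar, hpbar, ha, fun μ hμ => hμ.toFun_eq_none_of_outranked h.ne_ca.symm ha hc h.c_y_a⟩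

theorem sole_suitor_of_mem_cycleProfiles (h : IsCycleTriplet qbar a b c x y z)
    {pbar : M → PrefList W} (hpbar : pbar ∈ cycleProfiles a b c x y z)
    (hb : y ∉ (pbar b).val) (hc : y ∉ (pbar c).val) : ∀ m, y ∈ (pbar m).val → m = a := by
  intro m hm
  by_contra hma
  obtain rfl | hmb := eq_or_ne m b
  · exact hb hm
  obtain rfl | hmc := eq_or_ne m c
  · exact hc hm
  simp [hpbar.2.2.2 m hma hmb hmc] at hm

theorem exists_profile_toFun_eq_some (h : IsCycleTriplet qbar a b c x y z) {la : List W}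
    (hla : la ∈ cycleLists y x z) (hne : la ≠ [y]) :
    ∃ pbar ∈ cycleProfiles a b c x y z, (pbar a).val = la ∧
      ∀ μ, IsStable pbar qbar μ → μ.toFun a = some y := by
  rcases hla with rfl | rfl | rfl
  · exact absurd rfl hne
  · obtain ⟨pbar, hpbar, ha, hb, hc⟩ := exists_mem_cycleProfiles h.ne_ab h.ne_bc h.ne_ca
      h.ne_xy h.ne_yz h.ne_zx (la := [y, x]) (lb := [z]) (lc := [x]) (by simp [cycleLists])
      (by simp [cycleLists]) (by simp [cycleLists])
    have hsole := h.sole_suitor_of_mem_cycleProfiles hpbar (by simp [hb, h.ne_yz])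
      (by simp [hc, h.ne_xy.symm])
    exact ⟨pbar, hpbar, ha, fun μ hμ => hμ.toFun_eq_some_of_sole_suitor ha hsole h.a_mem_y⟩
  · obtain ⟨pbar, hpbar, ha, hb, hc⟩ := exists_mem_cycleProfiles h.ne_ab h.ne_bc h.ne_ca
      h.ne_xy h.ne_yz h.ne_zx (la := [z, y]) (lb := [x, z]) (lc := [x, z]) (by simp [cycleLists])
      (by simp [cycleLists]) (by simp [cycleLists])
    have hsole := h.sole_suitor_of_mem_cycleProfiles hpbar (by simp [hb, h.ne_xy.symm, h.ne_yz])
      (by simp [hc, h.ne_xy.symm, h.ne_yz])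
    exact ⟨pbar, hpbar, ha, fun μ hμ => hμ.toFun_eq_some_of_first_choice_lost h.ne_bc
      h.ne_ca.symm ha hb hc hsole h.a_mem_y h.b_x_c h.c_z_a⟩

theorem exists_not_isStable (h : IsCycleTriplet qbar a b c x y z) (μ : Matching M W) :
    ∃ pbar ∈ cycleProfiles a b c x y z, ¬ IsStable pbar qbar μ := by
  by_contra! hstable
  obtain ⟨pbar, hpbar, -, hnone⟩ := h.exists_profile_toFun_eq_none
  obtain ⟨pbar', hpbar', -, hsome⟩ :=
    h.exists_profile_toFun_eq_some (la := [y, x]) (by simp [cycleLists]) (by simp)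
  simpa [hnone μ (hstable pbar hpbar)] using hsome μ (hstable pbar' hpbar')

theorem next_eq_of_ospAux (h : IsCycleTriplet qbar a b c x y z) {next : PrefList W → Mech M W}
    {P : Set (M → PrefList W)} (hSP : cycleProfiles a b c x y z ⊆ P)
    (hstable : ∀ pbar ∈ cycleProfiles a b c x y z,
      IsStable pbar qbar ((Mech.node a next).run pbar))
    (hosp : (Mech.node a next).OSPAux a P) :
    ∀ pbar ∈ cycleProfiles a b c x y z, next (pbar a) = next ⟨[y], List.nodup_singleton y⟩ := by
  intro pbar hpbar
  obtain ⟨E, hE, hEa, hnone⟩ := h.exists_profile_toFun_eq_none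
  by_cases hy : (pbar a).val = [y]
  · exact congrArg next (Subtype.ext hy)
  obtain ⟨E', hE', hE'a, hsome⟩ := h.exists_profile_toFun_eq_some hpbar.1 hy
  rw [← Subtype.ext hE'a, ← show E a = ⟨[y], _⟩ from Subtype.ext hEa]
  by_contra hne
  refine hosp.1 rfl E (hSP hE) E' (hSP hE') (Ne.symm hne) ?_
  rw [hnone ((next (E a)).run E) (hstable E hE), hsome ((next (E' a)).run E') (hstable E' hE')]
  simp [outPrefers, hEa]

theorem exists_next_eq (h : IsCycleTriplet qbar a b c x y z) (q : M)
    (next : PrefList W → Mech M W) (P : Set (M → PrefList W))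
    (hSP : cycleProfiles a b c x y z ⊆ P)
    (hstable : ∀ pbar ∈ cycleProfiles a b c x y z,
      IsStable pbar qbar ((Mech.node q next).run pbar))
    (hosp : ∀ m ∈ ({a, b, c} : Set M), (Mech.node q next).OSPAux m P) :
    ∃ p, ∀ pbar ∈ cycleProfiles a b c x y z, next (pbar q) = next p := by
  obtain rfl | hqa := eq_or_ne q a
  · exact ⟨_, h.next_eq_of_ospAux hSP hstable (hosp q (by simp))⟩
  obtain rfl | hqb := eq_or_ne q b
  · rw [← cycleProfiles_rotate] at hSP hstable ⊢
    exact ⟨_, h.rotate.next_eq_of_ospAux hSP hstable (hosp q (by simp))⟩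
  obtain rfl | hqc := eq_or_ne q c
  · rw [← cycleProfiles_rotate, ← cycleProfiles_rotate] at hSP hstable ⊢
    exact ⟨_, h.rotate.rotate.next_eq_of_ospAux hSP hstable (hosp q (by simp))⟩
  exact ⟨⟨[], List.nodup_nil⟩, fun pbar hpbar =>
    congrArg next (Subtype.ext (hpbar.2.2.2 q hqa hqb hqc))⟩

end IsCycleTriplet

end

theorem no_stable_mech_OSP_for_cycle_triplet_general
    {M W : Type}
    (qbar : W → PrefList M) (a b c : M) (x y z : W)
    (hab : a ≠ b) (hac : a ≠ c) (hbc : b ≠ c)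
    (hxy : x ≠ y) (hxz : x ≠ z) (hyz : y ≠ z)
    (hmem : ∀ m : M, (m = a ∨ m = b ∨ m = c) →
      ∀ w : W, (w = x ∨ w = y ∨ w = z) → m ∈ (qbar w).val)
    (hx1 : prefers (qbar x) a b) (hx2 : prefers (qbar x) b c)
    (hy1 : prefers (qbar y) b c) (hy2 : prefers (qbar y) c a)
    (hz1 : prefers (qbar z) c a) (hz2 : prefers (qbar z) a b)
    (I : Mech M W) (hstable : IsStableRule qbar I.run) :
    ¬ (I.OSPFor a ∧ I.OSPFor b ∧ I.OSPFor c) := by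
  rintro ⟨ha, hb, hc⟩
  have h : IsCycleTriplet qbar a b c x y z :=
    { ne_ab := hab, ne_bc := hbc, ne_ca := hac.symm
      ne_xy := hxy, ne_yz := hyz, ne_zx := hxz.symm
      a_mem_y := hmem a (by simp) y (by simp)
      b_mem_z := hmem b (by simp) z (by simp)
      c_mem_x := hmem c (by simp) x (by simp)
      a_x_b := hx1, b_y_c := hy1, c_z_a := hz1
      b_x_c := hx2, c_y_a := hy2, a_z_b := hz2 }
  obtain ⟨pbar, -, hunstable⟩ := I.exists_not_isStable_run qbar h.exists_not_isStable
    h.exists_next_eq (Set.subset_univ _) (G := {a, b, c})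
    (by rintro m (rfl | rfl | rfl) <;> assumption)
  exact hunstable (hstable pbar)

/-- If there are distinct men `a,b,c` and distinct women `x,y,z` such
that `a,b,c` all appear on the lists of `x,y,z` and, restricted to `{a,b,c}`, these
lists satisfy `a ≻ₓ b ≻ₓ c`, `b ≻_y c ≻_y a`, `c ≻_z a ≻_z b`, then no `qbar`-stable
matching mechanism is OSP for all three of `a`, `b`, and `c`. -/
theorem no_stable_mech_OSP_for_cycle_triplet
    {M W : Type} [Fintype M] [Fintype W]
    (qbar : W → PrefList M) (a b c : M) (x y z : W)
    (hab : a ≠ b) (hac : a ≠ c) (hbc : b ≠ c)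
    (hxy : x ≠ y) (hxz : x ≠ z) (hyz : y ≠ z)
    (hmem : ∀ m : M, (m = a ∨ m = b ∨ m = c) →
      ∀ w : W, (w = x ∨ w = y ∨ w = z) → m ∈ (qbar w).val)
    (hx1 : prefers (qbar x) a b) (hx2 : prefers (qbar x) b c)
    (hy1 : prefers (qbar y) b c) (hy2 : prefers (qbar y) c a)
    (hz1 : prefers (qbar z) c a) (hz2 : prefers (qbar z) a b)
    (I : Mech M W) (hstable : IsStableRule qbar I.run) :
    ¬ (I.OSPFor a ∧ I.OSPFor b ∧ I.OSPFor c) :=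
  no_stable_mech_OSP_for_cycle_triplet_general qbar a b c x y z hab hac hbc hxy hxz hyz hmem hx1 hx2
    hy1 hy2 hz1 hz2 I hstable
end

section
/- Consider q̄ drawn uniformly at random from P(M)^W (each woman's preference list independently uniform over all preference lists over M). Fix three distinct men a, b, c. For every ε > 0 there exists N such that for every finite set of men M containing a, b, c with |M| ≥ 3 and every finite set of women W with |W| ≥ N, the probability that there exists a q̄-stable one-side-querying matching mechanism that is OSP for all three of a, b, and c is less than ε. -/
/-!
Suppose a woman `x` ranks `a ≻ b ≻ c` and a woman `y` ranks `c ≻ b ≻ a`. Let `a`, `b`, `c`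
submit lists of length one or two over `{x, y}` and everyone else the empty list; in these profiles
stability forces the outcomes that matter. Follow the profiles down the mechanism until a node
separates two of them. It queries `a`, `b` or `c`, and each of them has two profiles separated
there in which his other answer gets him a strictly better partner, contradicting OSP. If no node
separates them, they share a leaf, although `a`'s stable partners in two of them differ.

A uniformly random preference list contains `a ≻ b ≻ c` with probability at least
`1 / (2 ^ 3 * 3!) = 1 / 48`: putting the missing ones among `a, b, c` in front costs a factor
`2 ^ 3`, and relabelling shows that all `3!` orders of `a, b, c` are equally likely. As the
women's lists are independent, no woman ranks `a ≻ b ≻ c`, or none ranks `c ≻ b ≻ a`, with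
probability at most `2 * (47 / 48) ^ |W|`.
-/

open scoped List Nat

theorem List.Nodup.not_sublist_swap {α : Type*} {u v : α} {l : List α} (hl : l.Nodup)
    (huv : [u, v] <+ l) : ¬ [v, u] <+ l := by
  induction l with
  | nil => simp at huv
  | cons z l ih =>
    rw [List.nodup_cons] at hl
    intro hvu
    cases huv with
    | cons _ huv =>
      cases hvu with
      | cons _ hvu => exact ih hl.2 huv hvu
      | cons_cons _ hvu => exact hl.1 (huv.subset (by simp))
    | cons_cons _ huv =>
      cases hvu with
      | cons _ hvu => exact hl.1 (hvu.subset (by simp))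
      | cons_cons _ hvu => exact hl.1 (hvu.subset (by simp))

theorem prefers_of_sublist {α : Type} {q : PrefList α} {u v : α} {s : List α}
    (huv : [u, v] <+ s) (hs : s <+ q.val) : prefers q u v :=
  Or.inl (huv.trans hs)

theorem prefers_of_head?_eq {α : Type} {p : PrefList α} {w w' : α} (hp : p.val.head? = some w)
    (hw' : w' ∈ p.val) (hne : w' ≠ w) : prefers p w w' := by
  obtain ⟨l, hl⟩ := List.head?_eq_some_iff.mp hp
  rw [hl, List.mem_cons] at hw'
  exact Or.inl (hl ▸ (List.singleton_sublist.mpr (hw'.resolve_left hne)).cons_cons w)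

theorem Bool.apply_false_ne_apply_true {β : Type*} {g : Bool → β} {i j : Bool}
    (h : g i ≠ g j) : g false ≠ g true := by
  cases i <;> cases j <;> simp_all [eq_comm]

section Stability

variable {M W : Type} {pbar : M → PrefList W} {qbar : W → PrefList M} {μ : Matching M W}

theorem IsStable.mem_of_toFun_eq_some_s11 (h : IsStable pbar qbar μ) {m : M} {w : W}
    (hmw : μ.toFun m = some w) : w ∈ (pbar m).val :=
  by_contra fun hw => h (Or.inr ⟨m, w, hmw, Or.inl hw⟩)

theorem IsStable.toFun_eq_some (h : IsStable pbar qbar μ) {m : M} {w : W}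
    (hw : w ∈ (pbar m).val) (hm : m ∈ (qbar w).val)
    (hbelow : ∀ w' ∈ (pbar m).val, w' ≠ w → μ.toFun m = some w' → prefers (pbar m) w w')
    (hrival : ∀ m', m' ≠ m → w ∈ (pbar m').val → μ.toFun m' = some w →
      prefers (qbar w) m m') :
    μ.toFun m = some w := by
  by_contra hne
  refine h (Or.inl ⟨m, w, ?_, ?_⟩)
  · cases hmw : μ.toFun m with
    | none => exact hw
    | some w' => exact hbelow w' (h.mem_of_toFun_eq_some_s11 hmw) (fun e => hne (e ▸ hmw)) hmw
  · by_cases hheld : ∃ m', μ.toFun m' = some w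
    · obtain ⟨m', hm'⟩ := hheld
      have hne' : m' ≠ m := by rintro rfl; exact hne hm'
      exact Or.inl ⟨m', hm', hrival m' hne' (h.mem_of_toFun_eq_some_s11 hm') hm'⟩
    · exact Or.inr ⟨not_exists.mp hheld, hm⟩

theorem IsStable.toFun_eq_head (h : IsStable pbar qbar μ) {m : M} {w : W}
    (hw : (pbar m).val.head? = some w) (hm : m ∈ (qbar w).val)
    (hrival : ∀ m', m' ≠ m → w ∈ (pbar m').val → μ.toFun m' = some w →
      prefers (qbar w) m m') :
    μ.toFun m = some w :=
  h.toFun_eq_some (List.mem_of_head? hw) hm (fun _ hw' hne _ => prefers_of_head?_eq hw hw' hne)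
    hrival

theorem IsStable.toFun_eq_second (h : IsStable pbar qbar μ) {m : M} {w₀ w : W}
    (hp : (pbar m).val = [w₀, w]) (hw₀ : μ.toFun m ≠ some w₀) (hm : m ∈ (qbar w).val)
    (hrival : ∀ m', m' ≠ m → w ∈ (pbar m').val → μ.toFun m' = some w →
      prefers (qbar w) m m') :
    μ.toFun m = some w := by
  refine h.toFun_eq_some (by simp [hp]) hm (fun w' hw' hne hmw' => ?_) hrival
  rw [hp, List.mem_pair] at hw'
  exact absurd (hw'.resolve_right hne ▸ hmw') hw₀

theorem IsStable.toFun_eq_none (h : IsStable pbar qbar μ) {m : M}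
    (htaken : ∀ w ∈ (pbar m).val, ∃ m', m' ≠ m ∧ μ.toFun m' = some w) :
    μ.toFun m = none := by
  cases hmw : μ.toFun m with
  | none => rfl
  | some w =>
    obtain ⟨m', hne, hm'w⟩ := htaken w (h.mem_of_toFun_eq_some_s11 hmw)
    exact absurd (μ.inj hm'w hmw) hne

end Stability

/-- Follow the family of profiles down the tree for as long as it stays together. -/
theorem Mech.forall_run_eq_or_exists_split {M W ι : Type} (f : ι → M → PrefList W)
    (I : Mech M W) (P : Set (M → PrefList W)) (hP : ∀ i, f i ∈ P) :
    (∀ i j, I.run (f i) = I.run (f j)) ∨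
      ∃ (q : M) (next : PrefList W → Mech M W), (∃ i j, next (f i q) ≠ next (f j q)) ∧
        (I.OSPAux q P → ∀ i j, next (f i q) ≠ next (f j q) →
          ¬ outPrefers (f i q) ((I.run (f j)).toFun q) ((I.run (f i)).toFun q)) := by
  induction I generalizing P with
  | leaf => exact Or.inl fun _ _ => rfl
  | node q next ih =>
    by_cases hsplit : ∃ i j, next (f i q) ≠ next (f j q)
    · exact Or.inr ⟨q, next, hsplit, fun hOSP i j hij => hOSP.1 rfl _ (hP i) _ (hP j) hij⟩
    simp only [not_exists, not_not] at hsplit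
    rcases isEmpty_or_nonempty ι with _ | ⟨⟨i₀⟩⟩
    · exact Or.inl fun i => isEmptyElim i
    have hrun : ∀ i, (Mech.node q next).run (f i) = (next (f i₀ q)).run (f i) := fun i => by
      rw [Mech.run, hsplit i i₀]
    rcases ih (f i₀ q) {p ∈ P | next (p q) = next (f i₀ q)} fun i => ⟨hP i, hsplit i i₀⟩
      with hconst | ⟨q', next', hsplit', hOSP'⟩
    · exact Or.inl fun i j => by rw [hrun, hrun, hconst]
    · refine Or.inr ⟨q', next', hsplit', fun hOSP => ?_⟩
      simpa only [hrun] using hOSP' (hOSP.2 _)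

namespace ReversedTriple

variable {M W : Type} [DecidableEq M] {a b c : M} {x y : W}

def single (w : W) : PrefList W := ⟨[w], List.nodup_singleton w⟩

def pair {w w' : W} (h : w ≠ w') : PrefList W := ⟨[w, w'], by simp [h]⟩

variable (a b c) in
/-- `a`, `b`, `c` report `[y]`, `[x]`, `[x]` when their flag is `false` and `[y, x]`, `[y, x]`,
`[x, y]` when it is `true`; every other man lists nobody. Lemma names spell the flags of `a`, `b`,
`c` in this order, e.g. `fft`. -/
def profile (hxy : x ≠ y) (i : Bool × Bool × Bool) (m : M) : PrefList W :=
  if m = a then cond i.1 (pair hxy.symm) (single y)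
  else if m = b then cond i.2.1 (pair hxy.symm) (single x)
  else if m = c then cond i.2.2 (pair hxy) (single x)
  else ⟨[], List.nodup_nil⟩

variable {hxy : x ≠ y} {i : Bool × Bool × Bool}

theorem profile_a : profile a b c hxy i a = cond i.1 (pair hxy.symm) (single y) := by
  simp [profile]

theorem profile_b (hab : a ≠ b) :
    profile a b c hxy i b = cond i.2.1 (pair hxy.symm) (single x) := by
  simp [profile, hab.symm]

theorem profile_c (hac : a ≠ c) (hbc : b ≠ c) :
    profile a b c hxy i c = cond i.2.2 (pair hxy) (single x) := by
  simp [profile, hac.symm, hbc.symm]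

theorem profile_of_ne {m : M} (ha : m ≠ a) (hb : m ≠ b) (hc : m ≠ c) :
    profile a b c hxy i m = ⟨[], List.nodup_nil⟩ := by
  simp [profile, ha, hb, hc]

theorem eq_of_mem_profile {m : M} {w : W} (hw : w ∈ (profile a b c hxy i m).val) :
    m = a ∨ m = b ∨ m = c := by
  by_contra! hm
  simp [profile_of_ne hm.1 hm.2.1 hm.2.2] at hw

variable {qbar : W → PrefList M} {μ : Matching M W}
  (hab : a ≠ b) (hac : a ≠ c) (hbc : b ≠ c)
  (hqx : [a, b, c] <+ (qbar x).val) (hqy : [c, b, a] <+ (qbar y).val)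

include hab hqx in
theorem fff_toFun_b (h : IsStable (profile a b c hxy (false, false, false)) qbar μ) :
    μ.toFun b = some x := by
  refine h.toFun_eq_head (by simp [profile_b hab, single]) (hqx.subset (by simp)) ?_
  intro m' hne hw _
  rcases eq_of_mem_profile hw with rfl | rfl | rfl
  · simp [profile_a, single, hxy] at hw
  · exact absurd rfl hne
  · exact prefers_of_sublist (by simp) hqx

include hab hac hbc hqy in
theorem tff_toFun_a (h : IsStable (profile a b c hxy (true, false, false)) qbar μ) :
    μ.toFun a = some y := by
  refine h.toFun_eq_head (by simp [profile_a, pair]) (hqy.subset (by simp)) ?_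
  intro m' hne hw _
  rcases eq_of_mem_profile hw with rfl | rfl | rfl
  · exact absurd rfl hne
  · simp [profile_b hab, single, hxy.symm] at hw
  · simp [profile_c hac hbc, single, hxy.symm] at hw

include hab hac hbc hqx hqy in
theorem fft_toFun (h : IsStable (profile a b c hxy (false, false, true)) qbar μ) :
    μ.toFun a = none ∧ μ.toFun c = some y := by
  have hb : μ.toFun b = some x := by
    refine h.toFun_eq_head (by simp [profile_b hab, single]) (hqx.subset (by simp)) ?_
    intro m' hne hw _
    rcases eq_of_mem_profile hw with rfl | rfl | rfl
    · simp [profile_a, single, hxy] at hw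
    · exact absurd rfl hne
    · exact prefers_of_sublist (by simp) hqx
  have hc : μ.toFun c = some y := by
    refine h.toFun_eq_second (by simp [profile_c hac hbc, pair])
      (fun hcx => hbc (μ.inj hb hcx)) (hqy.subset (by simp)) ?_
    intro m' hne hw hm'
    rcases eq_of_mem_profile hw with rfl | rfl | rfl
    · exact prefers_of_sublist (by simp) hqy
    · exact absurd (hb.symm.trans hm') (by simpa using hxy)
    · exact absurd rfl hne
  refine ⟨h.toFun_eq_none fun w hw => ⟨c, hac.symm, ?_⟩, hc⟩
  obtain rfl : w = y := by simpa [profile_a, single] using hw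
  exact hc

include hab hac hbc hqx hqy in
theorem ftf_toFun_c (h : IsStable (profile a b c hxy (false, true, false)) qbar μ) :
    μ.toFun c = some x := by
  have hb : μ.toFun b = some y := by
    refine h.toFun_eq_head (by simp [profile_b hab, pair]) (hqy.subset (by simp)) ?_
    intro m' hne hw _
    rcases eq_of_mem_profile hw with rfl | rfl | rfl
    · exact prefers_of_sublist (by simp) hqy
    · exact absurd rfl hne
    · simp [profile_c hac hbc, single, hxy.symm] at hw
  refine h.toFun_eq_head (by simp [profile_c hac hbc, single]) (hqx.subset (by simp)) ?_
  intro m' hne hw hm'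
  rcases eq_of_mem_profile hw with rfl | rfl | rfl
  · simp [profile_a, single, hxy] at hw
  · exact absurd (hb.symm.trans hm') (by simpa using hxy.symm)
  · exact absurd rfl hne

include hab hac hbc hqx hqy in
theorem ttt_toFun_b (h : IsStable (profile a b c hxy (true, true, true)) qbar μ) :
    μ.toFun b = none := by
  have hay : μ.toFun a ≠ some y := by
    intro hay
    have hby : μ.toFun b = some y := by
      refine h.toFun_eq_head (by simp [profile_b hab, pair]) (hqy.subset (by simp)) ?_
      intro m' hne hw hm'
      rcases eq_of_mem_profile hw with rfl | rfl | rfl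
      · exact prefers_of_sublist (by simp) hqy
      · exact absurd rfl hne
      · exact absurd (μ.inj hay hm') hac
    exact hab (μ.inj hay hby)
  have hax : μ.toFun a = some x := by
    refine h.toFun_eq_second (by simp [profile_a, pair]) hay (hqx.subset (by simp)) ?_
    intro m' hne hw _
    rcases eq_of_mem_profile hw with rfl | rfl | rfl
    · exact absurd rfl hne
    · exact prefers_of_sublist (by simp) hqx
    · exact prefers_of_sublist (by simp) hqx
  have hcy : μ.toFun c = some y := by
    refine h.toFun_eq_second (by simp [profile_c hac hbc, pair])
      (fun hcx => hac (μ.inj hax hcx)) (hqy.subset (by simp)) ?_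
    intro m' hne hw hm'
    rcases eq_of_mem_profile hw with rfl | rfl | rfl
    · exact absurd (hax.symm.trans hm') (by simpa using hxy)
    · exact prefers_of_sublist (by simp) hqy
    · exact absurd rfl hne
  refine h.toFun_eq_none fun w hw => ?_
  obtain rfl | rfl : w = y ∨ w = x := by simpa [profile_b hab, pair] using hw
  · exact ⟨c, hbc.symm, hcy⟩
  · exact ⟨a, hab, hax⟩

end ReversedTriple

theorem ReversedTriple.not_exists_stable_mech_osp {M W : Type} {qbar : W → PrefList M} {a b c : M}
    {x y : W} (hab : a ≠ b) (hac : a ≠ c) (hbc : b ≠ c) (hxy : x ≠ y)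
    (hqx : [a, b, c] <+ (qbar x).val) (hqy : [c, b, a] <+ (qbar y).val) :
    ¬ ∃ I : Mech M W, IsStableRule qbar I.run ∧ I.OSPFor a ∧ I.OSPFor b ∧ I.OSPFor c := by
  classical
  rintro ⟨I, hstable, hOSPa, hOSPb, hOSPc⟩
  have hfft := fft_toFun hab hac hbc hqx hqy (hstable (profile a b c hxy (false, false, true)))
  have htff := tff_toFun_a hab hac hbc hqy (hstable (profile a b c hxy (true, false, false)))
  rcases Mech.forall_run_eq_or_exists_split (profile a b c hxy) I Set.univ (fun _ => trivial) with
    hconst | ⟨q, next, ⟨i, j, hij⟩, hOSP⟩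
  · rw [hconst _ (false, false, true), hfft.1] at htff
    cases htff
  -- At the separating node, `a` answering `[y]` (unmatched in `fft`) would rather answer `[y, x]`
  -- (partner `y` in `tff`); so would `b` with `[y, x]` in `ttt` and `[x]` in `fff`, and `c` with
  -- `[x, y]` in `fft` and `[x]` in `ftf`.
  by_cases hqa : q = a
  · rw [hqa] at hOSP hij
    rw [profile_a, profile_a] at hij
    have hsep := Bool.apply_false_ne_apply_true (g := fun t => next (cond t _ _)) hij
    refine hOSP hOSPa (false, false, true) (true, false, false) (by simpa [profile_a] using hsep) ?_
    rw [htff, hfft.1, profile_a]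
    simp [outPrefers, single]
  by_cases hqb : q = b
  · rw [hqb] at hOSP hij
    rw [profile_b hab, profile_b hab] at hij
    have hsep := Bool.apply_false_ne_apply_true (g := fun t => next (cond t _ _)) hij
    have hfff := fff_toFun_b hab hqx (hstable (profile a b c hxy (false, false, false)))
    have httt := ttt_toFun_b hab hac hbc hqx hqy (hstable (profile a b c hxy (true, true, true)))
    refine hOSP hOSPb (true, true, true) (false, false, false)
      (by simpa [profile_b hab] using hsep.symm) ?_
    rw [hfff, httt, profile_b hab]
    simp [outPrefers, pair]
  by_cases hqc : q = c
  · rw [hqc] at hOSP hij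
    rw [profile_c hac hbc, profile_c hac hbc] at hij
    have hsep := Bool.apply_false_ne_apply_true (g := fun t => next (cond t _ _)) hij
    have hftf := ftf_toFun_c hab hac hbc hqx hqy (hstable (profile a b c hxy (false, true, false)))
    refine hOSP hOSPc (false, false, true) (false, true, false)
      (by simpa [profile_c hac hbc] using hsep.symm) ?_
    rw [hftf, hfft.2, profile_c hac hbc]
    exact Or.inl (List.Sublist.refl _)
  rw [profile_of_ne hqa hqb hqc, profile_of_ne hqa hqb hqc] at hij
  exact hij rfl

theorem not_exists_stable_mech_osp_of_reversed {M W : Type} {qbar : W → PrefList M} {a b c : M}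
    {x y : W} (hab : a ≠ b) (hac : a ≠ c) (hbc : b ≠ c) (hqx : [a, b, c] <+ (qbar x).val)
    (hqy : [c, b, a] <+ (qbar y).val) :
    ¬ ∃ I : Mech M W, IsStableRule qbar I.run ∧ I.OSPFor a ∧ I.OSPFor b ∧ I.OSPFor c := by
  have hxy : x ≠ y := by
    rintro rfl
    exact (qbar x).2.not_sublist_swap ((by simp : [a, c] <+ [a, b, c]).trans hqx)
      ((by simp : [c, a] <+ [c, b, a]).trans hqy)
  exact ReversedTriple.not_exists_stable_mech_osp hab hac hbc hxy hqx hqy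

section Counting

variable {α : Type}

theorem List.Perm.exists_perm_map_eq {s t : List α} (h : s ~ t) (hs : s.Nodup) :
    ∃ π : Equiv.Perm α, t.map π = s ∧ ∀ z ∉ t, π z = z := by
  classical
  induction h with
  | nil => exact ⟨1, rfl, fun _ _ => rfl⟩
  | cons x hst ih =>
    rw [List.nodup_cons] at hs
    obtain ⟨π, hπ, hfix⟩ := ih hs.2
    have hx := hfix x fun hx => hs.1 (hst.mem_iff.2 hx)
    exact ⟨π, by simp [hπ, hx], fun z hz => hfix z fun hzt => hz (List.mem_cons_of_mem x hzt)⟩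
  | swap x y l =>
    simp only [List.nodup_cons, List.mem_cons, not_or] at hs
    obtain ⟨⟨hyx, hyl⟩, hxl, -⟩ := hs
    have hfix : ∀ z, z ≠ x → z ≠ y → Equiv.swap x y z = z :=
      fun z => Equiv.swap_apply_of_ne_of_ne
    refine ⟨Equiv.swap x y, ?_, fun z hz => hfix z (fun e => hz (by simp [e]))
      fun e => hz (by simp [e])⟩
    simp only [List.map_cons, Equiv.swap_apply_left, Equiv.swap_apply_right, List.cons.injEq,
      true_and]
    refine (List.map_congr_left fun z hz => hfix z ?_ ?_).trans (List.map_id l)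
    · rintro rfl; exact hxl hz
    · rintro rfl; exact hyl hz
  | trans h₁ h₂ ih₁ ih₂ =>
    obtain ⟨π₁, hπ₁, hfix₁⟩ := ih₁ hs
    obtain ⟨π₂, hπ₂, hfix₂⟩ := ih₂ (h₁.nodup_iff.1 hs)
    refine ⟨π₂.trans π₁, by rw [← hπ₁, ← hπ₂, List.map_map]; rfl, fun z hz => ?_⟩
    rw [Equiv.trans_apply, hfix₂ z hz, hfix₁ z fun hzt => hz (h₂.mem_iff.1 hzt)]

def PrefList.mapEquiv {β : Type} (π : α ≃ β) : PrefList α ≃ PrefList β where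
  toFun l := ⟨l.val.map π, l.2.map π.injective⟩
  invFun l := ⟨l.val.map π.symm, l.2.map π.symm.injective⟩
  left_inv l := Subtype.ext (by simp)
  right_inv l := Subtype.ext (by simp)

theorem PrefList.card_sublist_map {β : Type} (π : α ≃ β) (s : List α) :
    Nat.card {l : PrefList β // s.map π <+ l.val} = Nat.card {l : PrefList α // s <+ l.val} := by
  refine (Nat.card_congr (Equiv.subtypeEquiv (PrefList.mapEquiv π) fun l =>
    ⟨fun h => h.map π, fun h => ?_⟩)).symm
  simpa [PrefList.mapEquiv] using h.map π.symm

theorem PrefList.card_sublist_eq_of_perm {s t : List α} (h : s ~ t) (hs : s.Nodup) :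
    Nat.card {l : PrefList α // s <+ l.val} = Nat.card {l : PrefList α // t <+ l.val} := by
  obtain ⟨π, rfl, -⟩ := h.exists_perm_map_eq hs
  exact PrefList.card_sublist_map π t

variable [Fintype α] {t : List α}

/-- Put the members of `t` missing from `l` in front of `l`, and remember which ones were
missing. -/
theorem PrefList.card_le_two_pow_mul_card_forall_mem (ht : t.Nodup) :
    Nat.card (PrefList α) ≤
      2 ^ t.length * Nat.card {l : PrefList α // ∀ z ∈ t, z ∈ l.val} := by
  classical
  let complete (l : PrefList α) : {l : PrefList α // ∀ z ∈ t, z ∈ l.val} :=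
    ⟨⟨t.filter (· ∉ l.val) ++ l.val,
        List.nodup_append.2 ⟨ht.filter _, l.2, fun z hz z' hz' => by rintro rfl; simp_all⟩⟩,
      fun z hz => by by_cases hzl : z ∈ l.val <;> simp [hz, hzl]⟩
  let present (l : PrefList α) : t.toFinset.powerset :=
    ⟨t.toFinset.filter (· ∈ l.val), Finset.mem_powerset.2 (Finset.filter_subset _ _)⟩
  have hinj : Function.Injective fun l => (complete l, present l) := by
    intro l₁ l₂ h
    simp only [complete, present, Prod.mk.injEq, Subtype.mk.injEq] at h
    have hmissing : t.filter (· ∉ l₁.val) = t.filter (· ∉ l₂.val) :=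
      List.filter_congr fun z hz => by
        have := congrArg (z ∈ ·) h.2
        simp only [Finset.mem_filter, List.mem_toFinset, hz, true_and, eq_iff_iff] at this
        simp [this]
    exact Subtype.ext (List.append_cancel_left (hmissing ▸ h.1))
  calc Nat.card (PrefList α)
      ≤ Nat.card ({l : PrefList α // ∀ z ∈ t, z ∈ l.val} × t.toFinset.powerset) :=
        Nat.card_le_card_of_injective _ hinj
    _ = _ := by
      rw [Nat.card_prod, Nat.card_eq_finsetCard, Finset.card_powerset,
        List.toFinset_card_of_nodup ht, mul_comm]

/-- A list containing all of `t` contains as a sublist the permutation of `t` in which it lists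
them, and each permutation of `t` is as likely as `t` itself. -/
theorem PrefList.card_forall_mem_le (ht : t.Nodup) :
    Nat.card {l : PrefList α // ∀ z ∈ t, z ∈ l.val} ≤
      t.length ! * Nat.card {l : PrefList α // t <+ l.val} := by
  classical
  have hcard (p : PrefList α → Prop) [DecidablePred p] :
      Nat.card {l // p l} = (Finset.univ.filter p).card := by
    rw [Nat.card_eq_fintype_card, Fintype.card_subtype]
  rw [hcard, hcard]
  calc (Finset.univ.filter fun l : PrefList α => ∀ z ∈ t, z ∈ l.val).card
      ≤ (t.permutations.toFinset.biUnion fun s =>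
          Finset.univ.filter fun l : PrefList α => s <+ l.val).card := by
        refine Finset.card_le_card fun l hl => ?_
        simp only [Finset.mem_filter, Finset.mem_univ, true_and] at hl
        have hperm : l.val.filter (· ∈ t) ~ t :=
          (List.perm_ext_iff_of_nodup (l.2.filter _) ht).2 fun z => by simpa using hl z
        simpa using ⟨_, hperm, List.filter_sublist⟩
    _ ≤ ∑ s ∈ t.permutations.toFinset,
          (Finset.univ.filter fun l : PrefList α => s <+ l.val).card := Finset.card_biUnion_le
    _ = ∑ s ∈ t.permutations.toFinset,
          (Finset.univ.filter fun l : PrefList α => t <+ l.val).card := by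
        refine Finset.sum_congr rfl fun s hs => ?_
        have hst : s ~ t := List.mem_permutations.1 (List.mem_toFinset.1 hs)
        rw [← hcard, ← hcard, PrefList.card_sublist_eq_of_perm hst (hst.nodup_iff.2 ht)]
    _ ≤ t.length ! * (Finset.univ.filter fun l : PrefList α => t <+ l.val).card := by
        rw [Finset.sum_const, smul_eq_mul]
        gcongr
        exact (List.toFinset_card_le _).trans (List.length_permutations t).le

theorem PrefList.card_not_sublist_le (ht : t.Nodup) :
    (Nat.card {l : PrefList α // ¬ t <+ l.val} : ℝ) ≤
      (1 - 1 / (2 ^ t.length * t.length ! : ℝ)) * Nat.card (PrefList α) := by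
  classical
  have hsplit : Nat.card {l : PrefList α // t <+ l.val} +
      Nat.card {l : PrefList α // ¬ t <+ l.val} = Nat.card (PrefList α) := by
    rw [← Nat.card_sum]
    exact Nat.card_congr (Equiv.sumCompl _)
  have hbound : (Nat.card (PrefList α) : ℝ) ≤
      2 ^ t.length * t.length ! * Nat.card {l : PrefList α // t <+ l.val} := by
    have := (PrefList.card_le_two_pow_mul_card_forall_mem ht).trans
      (Nat.mul_le_mul_left _ (PrefList.card_forall_mem_le ht))
    rw [← mul_assoc] at this
    exact_mod_cast this
  have hpos : (0 : ℝ) < 2 ^ t.length * t.length ! := by positivity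
  rw [one_sub_div hpos.ne', div_mul_eq_mul_div, le_div_iff₀ hpos]
  rw [← hsplit] at hbound ⊢
  push_cast at hbound ⊢
  linarith

theorem card_forall_not_sublist_le {W : Type} [Fintype W] (ht : t.Nodup) :
    (Nat.card {qbar : W → PrefList α // ∀ w, ¬ t <+ (qbar w).val} : ℝ) ≤
      (1 - 1 / (2 ^ t.length * t.length ! : ℝ)) ^ Fintype.card W *
        Nat.card (W → PrefList α) := by
  rw [Nat.card_congr (Equiv.subtypePiEquivPi (β := fun _ : W => PrefList α)
      (p := fun _ l => ¬ t <+ l.val)), Nat.card_fun,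
    Nat.card_fun, Nat.card_eq_fintype_card (α := W)]
  push_cast
  rw [← mul_pow]
  exact pow_le_pow_left₀ (Nat.cast_nonneg _) (PrefList.card_not_sublist_le ht) _

end Counting

theorem Nat.card_subtype_le_add {α : Type*} [Finite α] {p q r : α → Prop}
    (h : ∀ x, p x → q x ∨ r x) :
    Nat.card {x // p x} ≤ Nat.card {x // q x} + Nat.card {x // r x} := by
  classical
  have := Fintype.ofFinite α
  simp only [Nat.card_eq_fintype_card]
  exact (Fintype.card_subtype_mono _ _ h).trans (Fintype.card_subtype_or q r)

/-- For `qbar` drawn uniformly at random from `P(M)^W` and any three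
fixed distinct men `a,b,c`, for every `ε > 0` there is `N` such that whenever the set
of men contains `a,b,c` with `|M| ≥ 3` and `|W| ≥ N`, the probability that some
`qbar`-stable matching mechanism is OSP for all three of `a`, `b`, `c` is less
than `ε`. -/
theorem random_market_no_stable_mech_OSP_for_triplet :
    ∀ ε : ℝ, 0 < ε → ∃ N : ℕ,
      ∀ (M : Type) [Fintype M] (a b c : M),
        a ≠ b → a ≠ c → b ≠ c → 3 ≤ Fintype.card M →
        ∀ (W : Type) [Fintype W], N ≤ Fintype.card W →
        (Nat.card {qbar : W → PrefList M //
            ∃ I : Mech M W, IsStableRule qbar I.run ∧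
              I.OSPFor a ∧ I.OSPFor b ∧ I.OSPFor c} : ℝ) /
          (Nat.card (W → PrefList M) : ℝ) < ε := by
  intro ε hε
  obtain ⟨N, hN⟩ := exists_pow_lt_of_lt_one (half_pos hε) (by norm_num : (47 / 48 : ℝ) < 1)
  refine ⟨N, fun M _ a b c hab hac hbc _ W _ hW => ?_⟩
  have hcover : ∀ qbar : W → PrefList M,
      (∃ I : Mech M W, IsStableRule qbar I.run ∧ I.OSPFor a ∧ I.OSPFor b ∧ I.OSPFor c) →
        (∀ w, ¬ [a, b, c] <+ (qbar w).val) ∨ ∀ w, ¬ [c, b, a] <+ (qbar w).val := by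
    intro qbar hI
    by_contra! h
    obtain ⟨⟨x, hx⟩, y, hy⟩ := h
    exact not_exists_stable_mech_osp_of_reversed hab hac hbc hx hy hI
  have habc := card_forall_not_sublist_le (W := W) (by simp [hab, hac, hbc] : [a, b, c].Nodup)
  have hcba := card_forall_not_sublist_le (W := W)
    (by simp [hab.symm, hac.symm, hbc.symm] : [c, b, a].Nodup)
  have hρ : ∀ t : List M, t.length = 3 → 1 - 1 / (2 ^ t.length * t.length ! : ℝ) = 47 / 48 := by
    intro t ht
    rw [ht]
    norm_num [Nat.factorial]
  rw [hρ _ rfl] at habc hcba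
  have : Nonempty (PrefList M) := ⟨⟨[], List.nodup_nil⟩⟩
  have htotal : (0 : ℝ) < Nat.card (W → PrefList M) := by exact_mod_cast Nat.card_pos
  have hpow : (47 / 48 : ℝ) ^ Fintype.card W ≤ (47 / 48) ^ N :=
    pow_le_pow_of_le_one (by norm_num) (by norm_num) hW
  rw [div_lt_iff₀ htotal]
  calc _ ≤ (Nat.card {qbar : W → PrefList M // ∀ w, ¬ [a, b, c] <+ (qbar w).val} : ℝ) +
        Nat.card {qbar : W → PrefList M // ∀ w, ¬ [c, b, a] <+ (qbar w).val} := by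
        exact_mod_cast Nat.card_subtype_le_add hcover
    _ ≤ 2 * (47 / 48) ^ N * Nat.card (W → PrefList M) := by
        linarith [mul_le_mul_of_nonneg_right hpow htotal.le]
    _ < ε * Nat.card (W → PrefList M) := by
        linarith [mul_lt_mul_of_pos_right hN htotal]
end

section
/- For every subset M' ⊆ M of men, the following are equivalent: (i) there exists a stable two-sides-querying matching mechanism that is OSP for every man in M'; (ii) for every preference profile q̄ ∈ P(M)^W for the women over the men, there exists a q̄-stable one-side-querying matching mechanism that is OSP for every man in M'. -/
/-!
Women's answers are never subject to an OSP constraint for a man, so a two-sided mechanism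
may first ask every woman and then run a one-sided mechanism chosen for her answers.
Conversely, fixing the women's answers to `qbar` prunes a two-sided mechanism to a one-sided
one. The pruning must not merge subtrees that were distinct before, since that would enlarge
the sets of profiles passing through a node: at every man's node he is asked a second time,
and answers outside the edge chosen by the first one lead to a dead end, so that the edges of
the pruned tree stay in bijection with the original ones.
-/

instance {α : Type} : Inhabited (PrefList α) := ⟨⟨[], List.nodup_nil⟩⟩

variable {M W : Type}

def Matching.empty : Matching M W :=
  ⟨fun _ => none, fun _ _ _ h => nomatch h⟩

namespace Mech

theorem OSPAux.mono {m : M} {t : Mech M W} :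
    ∀ {P P' : Set (M → PrefList W)}, OSPAux m t P → P' ⊆ P → OSPAux m t P' := by
  induction t with
  | leaf μ => exact fun _ _ => trivial
  | node q next ih =>
    rintro P P' ⟨hdiverge, hchild⟩ hsub
    exact ⟨fun hq pbar hp pbar' hp' => hdiverge hq pbar (hsub hp) pbar' (hsub hp'),
      fun p => ih p (hchild p) fun pbar hp => ⟨hsub hp.1, hp.2⟩⟩

def deadEnd (q : M) : Mech M W :=
  node q fun _ => leaf Matching.empty

theorem ospAux_deadEnd (m q : M) (P : Set (M → PrefList W)) : OSPAux m (deadEnd q) P :=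
  ⟨fun _ _ _ _ _ hne => (hne rfl).elim, fun _ => trivial⟩

open Classical in
noncomputable def guard (q : M) (S : Set (PrefList W)) (t : Mech M W) : Mech M W :=
  node q fun p => if p ∈ S then t else deadEnd q

theorem run_guard {q : M} {S : Set (PrefList W)} (t : Mech M W) {pbar : M → PrefList W}
    (hq : pbar q ∈ S) : (guard q S t).run pbar = t.run pbar := by
  simp only [guard, run, if_pos hq]

theorem mem_of_guard_eq {q : M} {S S' : Set (PrefList W)} {t t' : Mech M W}
    (h : guard q S t = guard q S' t') (ht : t ≠ deadEnd q) {p : PrefList W} (hp : p ∈ S) :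
    p ∈ S' := by
  by_contra hp'
  have := congrFun (node.inj h).2 p
  simp only [if_pos hp, if_neg hp'] at this
  exact ht this

theorem ospAux_guard {m q : M} {S : Set (PrefList W)} {t : Mech M W}
    {P : Set (M → PrefList W)} (hS : ∀ pbar ∈ P, pbar q ∈ S) (ht : OSPAux m t P) :
    OSPAux m (guard q S t) P := by
  classical
  refine ⟨?_, fun p => ?_⟩
  · rintro rfl pbar hp pbar' hp' hne
    simp only [if_pos (hS pbar hp), if_pos (hS pbar' hp')] at hne
    exact (hne rfl).elim
  · by_cases hpS : p ∈ S
    · simp only [if_pos hpS]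
      exact ht.mono fun pbar hp => hp.1
    · simp only [if_neg hpS]
      exact ospAux_deadEnd m q _

def toMech2 : Mech M W → Mech2 M W
  | leaf μ => .leaf μ
  | node q next => .nodeM q fun p => toMech2 (next p)

theorem run_toMech2 (J : Mech M W) (pbar : M → PrefList W) (qbar : W → PrefList M) :
    J.toMech2.run pbar qbar = J.run pbar := by
  induction J with
  | leaf μ => rfl
  | node q next ih => exact ih (pbar q)

theorem toMech2_injective : Function.Injective (toMech2 : Mech M W → Mech2 M W) := by
  intro J
  induction J with
  | leaf μ =>
    rintro (_ | _) h <;> cases h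
    rfl
  | node q next ih =>
    rintro (_ | ⟨q', next'⟩) h
    · cases h
    · obtain ⟨rfl, hnext⟩ := Mech2.nodeM.inj h
      exact congrArg (node q) (funext fun p => ih p (congrFun hnext p))

theorem OSPAux.toMech2 {m : M} {J : Mech M W} :
    ∀ {Q : Set (M → PrefList W)} {P : Set ((M → PrefList W) × (W → PrefList M))},
      OSPAux m J Q → (∀ r ∈ P, r.1 ∈ Q) → Mech2.OSPAux m J.toMech2 P := by
  induction J with
  | leaf μ => exact fun _ _ => trivial
  | node q next ih =>
    rintro Q P ⟨hdiverge, hchild⟩ hPQ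
    refine ⟨fun hq r hr r' hr' hne => ?_, fun p => ih p (hchild p) ?_⟩
    · rw [run_toMech2, run_toMech2]
      exact hdiverge hq r.1 (hPQ r hr) r'.1 (hPQ r' hr') fun e => hne (congrArg Mech.toMech2 e)
    · exact fun r hr => ⟨hPQ r hr.1, toMech2_injective hr.2⟩

end Mech

namespace Mech2

def queryWomen [DecidableEq W] (k : (W → PrefList M) → Mech2 M W) :
    List W → (W → PrefList M) → Mech2 M W
  | [], acc => k acc
  | w :: ws, acc => nodeW w fun p => queryWomen k ws (Function.update acc w p)

theorem run_queryWomen [DecidableEq W] (k : (W → PrefList M) → Mech2 M W)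
    (pbar : M → PrefList W) (qbar : W → PrefList M) :
    ∀ (ws : List W) (acc : W → PrefList M), (∀ w ∉ ws, acc w = qbar w) →
      (queryWomen k ws acc).run pbar qbar = (k qbar).run pbar qbar
  | [], acc, hacc => by
    rw [queryWomen, funext fun w => hacc w List.not_mem_nil]
  | w :: ws, acc, hacc => by
    refine run_queryWomen k pbar qbar ws _ fun w' hw' => ?_
    by_cases hw : w' = w
    · rw [hw, Function.update_self]
    · rw [Function.update_of_ne hw, hacc w' (by simp [hw, hw'])]

theorem ospAux_queryWomen [DecidableEq W] {m : M} {k : (W → PrefList M) → Mech2 M W}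
    (hk : ∀ qbar P, OSPAux m (k qbar) P) :
    ∀ (ws : List W) (acc : W → PrefList M) (P : Set ((M → PrefList W) × (W → PrefList M))),
      OSPAux m (queryWomen k ws acc) P
  | [], acc, P => hk acc P
  | _ :: ws, _, _ => fun _ => ospAux_queryWomen hk ws _ _

noncomputable def prune (qbar : W → PrefList M) : Mech2 M W → Mech M W
  | leaf μ => .leaf μ
  | nodeM q next => .node q fun p => .guard q {p' | next p' = next p} (prune qbar (next p))
  | nodeW w next => prune qbar (next (qbar w))

theorem run_prune (qbar : W → PrefList M) (t : Mech2 M W) (pbar : M → PrefList W) :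
    (t.prune qbar).run pbar = t.run pbar qbar := by
  induction t with
  | leaf μ => rfl
  | nodeM q next ih => exact (Mech.run_guard _ (by exact rfl)).trans (ih (pbar q))
  | nodeW w next ih => exact ih (qbar w)

theorem prune_ne_deadEnd (qbar : W → PrefList M) (t : Mech2 M W) (q : M) :
    t.prune qbar ≠ .deadEnd q := by
  induction t with
  | leaf μ => intro h; cases h
  | nodeM q' next ih =>
    intro h
    cases congrFun (Mech.node.inj h).2 default
  | nodeW w next ih => exact ih (qbar w)

theorem OSPAux.prune {m : M} (qbar : W → PrefList M) {t : Mech2 M W} :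
    ∀ {P : Set ((M → PrefList W) × (W → PrefList M))} {Q : Set (M → PrefList W)},
      OSPAux m t P → (∀ pbar ∈ Q, (pbar, qbar) ∈ P) → Mech.OSPAux m (t.prune qbar) Q := by
  induction t with
  | leaf μ => exact fun _ _ => trivial
  | nodeW w next ih =>
    exact fun h hQ => (ih (qbar w) (h (qbar w))) fun pbar hp => ⟨hQ pbar hp, rfl⟩
  | nodeM q next ih =>
    rintro P Q ⟨hdiverge, hchild⟩ hQ
    have hfibre : ∀ {x y}, Mech.guard q {p' | next p' = next x} ((next x).prune qbar) =
        Mech.guard q {p' | next p' = next y} ((next y).prune qbar) → next x = next y :=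
      fun h => Mech.mem_of_guard_eq h (prune_ne_deadEnd qbar _ q) rfl
    refine ⟨fun hq pbar hp pbar' hp' hne => ?_,
      fun p => Mech.ospAux_guard (fun pbar hp => ?_) ?_⟩
    · subst hq
      rw [Mech.run_guard _ (by exact rfl), Mech.run_guard _ (by exact rfl), run_prune, run_prune]
      exact hdiverge rfl _ (hQ pbar hp) _ (hQ pbar' hp') fun e => hne (by simp only [e])
    · exact hfibre hp.2
    · exact ih p (hchild p) fun pbar hp => ⟨hQ pbar hp.1, hfibre hp.2⟩

end Mech2

theorem two_sided_osp_iff_one_sided_osp_general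
    {M W : Type} [Fintype W] (M' : Set M) :
    (∃ I : Mech2 M W,
        (∀ pbar qbar, IsStable pbar qbar (I.run pbar qbar)) ∧
        ∀ m ∈ M', I.OSPForM m) ↔
      (∀ qbar : W → PrefList M, ∃ I : Mech M W,
        IsStableRule qbar I.run ∧ ∀ m ∈ M', I.OSPFor m) := by
  classical
  constructor
  · rintro ⟨I, hstable, hosp⟩ qbar
    refine ⟨I.prune qbar, fun pbar => ?_, fun m hm => (hosp m hm).prune qbar fun _ _ => trivial⟩
    rw [Mech2.run_prune]
    exact hstable pbar qbar
  · intro h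
    choose F hstable hosp using h
    refine ⟨Mech2.queryWomen (fun qbar => (F qbar).toMech2) Finset.univ.toList default,
      fun pbar qbar => ?_, fun m hm => Mech2.ospAux_queryWomen ?_ _ _ _⟩
    · have hall : ∀ w ∉ (Finset.univ : Finset W).toList,
          (default : W → PrefList M) w = qbar w :=
        fun w hw => absurd (Finset.mem_toList.2 (Finset.mem_univ w)) hw
      rw [Mech2.run_queryWomen _ _ _ _ _ hall, Mech.run_toMech2]
      exact hstable qbar pbar
    · exact fun qbar P => (hosp qbar m hm).toMech2 fun _ _ => trivial

/-- For every subset `M'` of the men, there exists a stable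
two-sides-querying matching mechanism that is OSP for every man in `M'` if and only
if for every women's profile `qbar` there exists a `qbar`-stable one-side-querying
matching mechanism that is OSP for every man in `M'`. -/
theorem two_sided_osp_iff_one_sided_osp
    {M W : Type} [Fintype M] [Fintype W] (M' : Set M) :
    (∃ I : Mech2 M W,
        (∀ pbar qbar, IsStable pbar qbar (I.run pbar qbar)) ∧
        ∀ m ∈ M', I.OSPForM m) ↔
      (∀ qbar : W → PrefList M, ∃ I : Mech M W,
        IsStableRule qbar I.run ∧ ∀ m ∈ M', I.OSPFor m) :=
  two_sided_osp_iff_one_sided_osp_general M'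
end
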